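/- For a p×q transportation polytope P with integer marginals and any fixed cell (i,j), the set of values {x_{i,j} : x an integer point of P} is an interval of integers: if a and b are achieved values with a ≤ c ≤ b and c ∈ ℤ, then c is achieved. -/

import Mathlib

open Finset

/-- The integer points of the `p × q` transportation polytope with integer marginals. -/
def intTransportationTables (p q : ℕ) (u : Fin p → ℤ) (v : Fin q → ℤ) :
    Set (Matrix (Fin p) (Fin q) ℤ) :=
  {x | (∀ i j, 0 ≤ x i j) ∧ (∀ i, ∑ j, x i j = u i) ∧ (∀ j, ∑ i, x i j = v j)}

/-!
If `x` and `y` are integer tables with `x i j < y i j`, the column `j` sums of `y - x` vanish, so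
`y i' j < x i' j` for some row `i'`, and then the row `i'` sums give `x i' j' < y i' j'` for some
column `j'`. Subtracting the elementary cycle `+1` at `(i, j), (i', j')`, `-1` at `(i, j'), (i', j)`
from `y` keeps the marginals and non-negativity and lowers the entry `(i, j)` by one. Iterating
walks the entry down from `y i j` through every integer to `x i j`.
-/

theorem Finset.exists_lt_of_sum_eq_of_lt {ι M : Type*} [AddCommMonoid M] [LinearOrder M]
    [IsOrderedCancelAddMonoid M] {s : Finset ι} {f g : ι → M} (hsum : ∑ k ∈ s, f k = ∑ k ∈ s, g k)
    {a : ι} (ha : a ∈ s) (hlt : f a < g a) : ∃ b ∈ s, g b < f b := by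
  by_contra! hle
  exact (Finset.sum_lt_sum hle ⟨a, ha, hlt⟩).ne hsum

section CycleMove

variable {m n R : Type*} [DecidableEq m] [DecidableEq n] [Ring R]

def Matrix.cycleMove (i i' : m) (j j' : n) : Matrix m n R :=
  Matrix.vecMulVec (Pi.single i 1 - Pi.single i' 1) (Pi.single j 1 - Pi.single j' 1)

theorem Matrix.cycleMove_apply (i i' : m) (j j' : n) (k : m) (l : n) :
    Matrix.cycleMove (R := R) i i' j j' k l =
      (Pi.single i 1 - Pi.single i' 1 : m → R) k * (Pi.single j 1 - Pi.single j' 1 : n → R) l :=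
  rfl

theorem Matrix.cycleMove_apply_self {i i' : m} {j j' : n} (hi : i ≠ i') (hj : j ≠ j') :
    Matrix.cycleMove (R := R) i i' j j' i j = 1 := by
  simp [Matrix.cycleMove_apply, hi, hj]

theorem Matrix.sum_cycleMove_row [Fintype n] (i i' : m) (j j' : n) (k : m) :
    ∑ l, Matrix.cycleMove (R := R) i i' j j' k l = 0 := by
  simp [Matrix.cycleMove_apply, ← Finset.mul_sum]

theorem Matrix.sum_cycleMove_col [Fintype m] (i i' : m) (j j' : n) (l : n) :
    ∑ k, Matrix.cycleMove (R := R) i i' j j' k l = 0 := by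
  simp [Matrix.cycleMove_apply, ← Finset.sum_mul]

end CycleMove

section Tables

variable {p q : ℕ} {u : Fin p → ℤ} {v : Fin q → ℤ}

theorem sub_cycleMove_mem_intTransportationTables {y : Matrix (Fin p) (Fin q) ℤ}
    (hy : y ∈ intTransportationTables p q u v) {i i' : Fin p} {j j' : Fin q}
    (hij : 1 ≤ y i j) (hi'j' : 1 ≤ y i' j') :
    y - Matrix.cycleMove i i' j j' ∈ intTransportationTables p q u v := by
  obtain ⟨hy0, hyr, hyc⟩ := hy
  refine ⟨fun k l => ?_, fun k => ?_, fun l => ?_⟩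
  · have := hy0 k l
    simp only [Matrix.sub_apply, Matrix.cycleMove_apply, Pi.sub_apply, Pi.single_apply]
    split_ifs <;> subst_vars <;> omega
  · simp [Finset.sum_sub_distrib, hyr, Matrix.sum_cycleMove_row]
  · simp [Finset.sum_sub_distrib, hyc, Matrix.sum_cycleMove_col]

theorem exists_mem_intTransportationTables_entry_eq_sub_one {x y : Matrix (Fin p) (Fin q) ℤ}
    (hx : x ∈ intTransportationTables p q u v) (hy : y ∈ intTransportationTables p q u v)
    {i : Fin p} {j : Fin q} (hlt : x i j < y i j) :
    ∃ z ∈ intTransportationTables p q u v, z i j = y i j - 1 := by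
  obtain ⟨i', -, hi'⟩ := Finset.exists_lt_of_sum_eq_of_lt (s := univ) (f := fun k => x k j)
    (g := fun k => y k j) (by rw [hx.2.2, hy.2.2]) (mem_univ i) hlt
  obtain ⟨j', -, hj'⟩ := Finset.exists_lt_of_sum_eq_of_lt (s := univ) (f := fun l => y i' l)
    (g := fun l => x i' l) (by rw [hx.2.1, hy.2.1]) (mem_univ j) hi'
  have hi : i ≠ i' := by rintro rfl; omega
  have hj : j ≠ j' := by rintro rfl; omega
  refine ⟨y - Matrix.cycleMove i i' j j', ?_, ?_⟩
  · exact sub_cycleMove_mem_intTransportationTables hy (by linarith [hx.1 i j])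
      (by linarith [hx.1 i' j'])
  · simp [Matrix.cycleMove_apply_self hi hj]

theorem exists_mem_intTransportationTables_entry_eq {x y : Matrix (Fin p) (Fin q) ℤ}
    (hx : x ∈ intTransportationTables p q u v) (hy : y ∈ intTransportationTables p q u v)
    {i : Fin p} {j : Fin q} {c : ℤ} (hxc : x i j ≤ c) (hcy : c ≤ y i j) :
    ∃ z ∈ intTransportationTables p q u v, z i j = c := by
  induction c, hcy using Int.leInductionDown with
  | base => exact ⟨y, hy, rfl⟩
  | pred c _ ih =>
    obtain ⟨z, hz, rfl⟩ := ih (by omega)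
    exact exists_mem_intTransportationTables_entry_eq_sub_one hx hz (by omega)

end Tables

theorem intTransportationTables_entry_interval_general (p q : ℕ) (u : Fin p → ℤ) (v : Fin q → ℤ)
    (i : Fin p) (j : Fin q) (a b c : ℤ)
    (ha : ∃ x ∈ intTransportationTables p q u v, x i j = a)
    (hb : ∃ x ∈ intTransportationTables p q u v, x i j = b)
    (hac : a ≤ c) (hcb : c ≤ b) :
    ∃ x ∈ intTransportationTables p q u v, x i j = c := by
  obtain ⟨x, hx, rfl⟩ := ha
  obtain ⟨y, hy, rfl⟩ := hb
  exact exists_mem_intTransportationTables_entry_eq hx hy hac hcb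

/-- Integer range of a coordinate: the set of values of a fixed entry over all integer
points of a transportation polytope is an interval of integers. -/
theorem intTransportationTables_entry_interval (p q : ℕ) (u : Fin p → ℤ) (v : Fin q → ℤ)
    (hsum : ∑ i, u i = ∑ j, v j) (i : Fin p) (j : Fin q) (a b c : ℤ)
    (ha : ∃ x ∈ intTransportationTables p q u v, x i j = a)
    (hb : ∃ x ∈ intTransportationTables p q u v, x i j = b)
    (hac : a ≤ c) (hcb : c ≤ b) :
    ∃ x ∈ intTransportationTables p q u v, x i j = c :=
  intTransportationTables_entry_interval_general p q u v i j a b c ha hb hac hcb
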